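/- Corollary (HPL for double complexes, paper's Corollary in Appendix B): Let (C^{j,k})_{j,k≥0} be a first-quadrant double complex of R-modules with horizontal differential h and vertical differential v, equipped with a column-wise contraction (ι, π, η) onto a bigraded module S. Then h∘η is locally nilpotent on the totalization Tot(C), id − h∘η is invertible, and, setting α = (id − h∘η)^{−1}∘h = Σ_{m≥0} (h∘η)^m∘h: (i) π∘α∘ι is a square-zero differential on Tot(S); (ii) the maps ι + η∘α∘ι and π + π∘α∘η are chain maps between (Tot(S), π∘α∘ι) and (Tot(C), h+v); (iii) these chain maps are quasi-isomorphisms; and (iv) (ι + η∘α∘ι)∘(π + π∘α∘η) = id + (h+v)∘η′ + η′∘(h+v) where η′ = η + η∘α∘η. -/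

import Mathlib

/-!
Since `η` lowers the row index and `h` raises the column index, both staircase operators
`Φ = hη` and `Ψ = ηh` push `Totⁿ` one step along its finite column filtration, so they are
nilpotent; put `A = (1 - Φ)⁻¹` and `B = (1 - Ψ)⁻¹`. The perturbed data have the closed forms
`ι' = Bι`, `π' = πA`, `η' = Bη`. Because `ιπ - 1 = vη + ηv` and `hv = -vh`, commuting `v` past
`Φ` or `Ψ` only produces the error terms `h(ιπ - 1)` and `(ιπ - 1)h`, and with `h² = 0` the chain
map identities and the homotopy `ι'π' = 1 + dη' + η'd` reduce to algebra in `A` and `B`.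
Finally `π'ι' = πABι = 1 + π(AB - 1)ι`, where `AB - 1 = ΦAB + ΨB` again raises the filtration,
so `π'ι'` is invertible. A homotopy `ι'π' ≃ 1` together with an invertible `π'ι'` makes both
maps quasi-isomorphisms, and injectivity of `ι'` transports `d² = 0` to the transferred
differential.
-/

universe u v₁

open DirectSum

/-- Index set of the total-degree-`n` part of a ℤ-bigraded object. -/
abbrev TotIdx (n : ℤ) : Type := { p : ℤ × ℤ // p.1 + p.2 = n }

/-- Total-degree-`n` module `Totⁿ = ⊕_{j+k=n} C^{j,k}` of a bigraded family. -/
abbrev Tot (C : ℤ → ℤ → Type v₁) [∀ j k, AddCommGroup (C j k)] (n : ℤ) :=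
  ⨁ p : TotIdx n, C p.1.1 p.1.2

/-- Inclusion of the `(j,k)` component into the total-degree-`n` module. -/
noncomputable def toTot (R : Type u) [Ring R] (C : ℤ → ℤ → Type v₁)
    [∀ j k, AddCommGroup (C j k)] [∀ j k, Module R (C j k)]
    (j k n : ℤ) (hn : j + k = n) : C j k →ₗ[R] Tot C n :=
  DirectSum.lof R (TotIdx n) (fun p => C p.1.1 p.1.2) ⟨(j, k), hn⟩

/-- Build a linear map out of the total-degree-`n` module from componentwise data. -/
noncomputable def totMk (R : Type u) [Ring R] (C D : ℤ → ℤ → Type v₁)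
    [∀ j k, AddCommGroup (C j k)] [∀ j k, Module R (C j k)]
    [∀ j k, AddCommGroup (D j k)] [∀ j k, Module R (D j k)]
    (n m : ℤ) (g : ∀ j k : ℤ, j + k = n → (C j k →ₗ[R] Tot D m)) :
    Tot C n →ₗ[R] Tot D m :=
  DirectSum.toModule R (TotIdx n) (Tot D m) fun p => g p.1.1 p.1.2 p.2

/-- Transport along equalities of the two indices of a bigraded family. -/
noncomputable def lcast (R : Type u) [Ring R] (C : ℤ → ℤ → Type v₁)
    [∀ j k, AddCommGroup (C j k)] [∀ j k, Module R (C j k)]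
    {j j' k k' : ℤ} (hj : j = j') (hk : k = k') : C j k →ₗ[R] C j' k' := by
  subst hj; subst hk; exact LinearMap.id

section

variable (R : Type u) [Ring R]
variable (C : ℤ → ℤ → Type v₁) [∀ j k, AddCommGroup (C j k)] [∀ j k, Module R (C j k)]
variable (S : ℤ → ℤ → Type v₁) [∀ j k, AddCommGroup (S j k)] [∀ j k, Module R (S j k)]
variable (h : ∀ j k : ℤ, C j k →ₗ[R] C (j + 1) k)
variable (v : ∀ j k : ℤ, C j k →ₗ[R] C j (k + 1))
variable (η : ∀ j k : ℤ, C j k →ₗ[R] C j (k - 1))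
variable (ι : ∀ j k : ℤ, S j k →ₗ[R] C j k)
variable (π : ∀ j k : ℤ, C j k →ₗ[R] S j k)

/-- The horizontal differential on totalizations. -/
noncomputable def hTot (n m : ℤ) (_ : n + 1 = m) : Tot C n →ₗ[R] Tot C m :=
  totMk R C C n m fun j k hjk => toTot R C (j + 1) k m (by omega) ∘ₗ h j k

/-- The vertical differential on totalizations. -/
noncomputable def vTot (n m : ℤ) (_ : n + 1 = m) : Tot C n →ₗ[R] Tot C m :=
  totMk R C C n m fun j k hjk => toTot R C j (k + 1) m (by omega) ∘ₗ v j k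

/-- The total differential `h + v` on the totalization `Tot(C)`. -/
noncomputable def dTot (n : ℤ) : Tot C n →ₗ[R] Tot C (n + 1) :=
  hTot R C h n (n + 1) rfl + vTot R C v n (n + 1) rfl

/-- The homotopy `η` on totalizations. -/
noncomputable def etaTot (n m : ℤ) (_ : m + 1 = n) : Tot C n →ₗ[R] Tot C m :=
  totMk R C C n m fun j k hjk => toTot R C j (k - 1) m (by omega) ∘ₗ η j k

/-- `ι` on totalizations. -/
noncomputable def iotaTot (n : ℤ) : Tot S n →ₗ[R] Tot C n :=
  totMk R S C n n fun j k hjk => toTot R C j k n hjk ∘ₗ ι j k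

/-- `π` on totalizations. -/
noncomputable def piTot (n : ℤ) : Tot C n →ₗ[R] Tot S n :=
  totMk R C S n n fun j k hjk => toTot R S j k n hjk ∘ₗ π j k

/-- The staircase operator `h∘η` on `Tot(C)` in degree `n`. -/
noncomputable def Phi (n : ℤ) : Module.End R (Tot C n) :=
  hTot R C h (n - 1) n (by omega) ∘ₗ etaTot R C η n (n - 1) (by omega)

/-- `α = (id − h∘η)⁻¹ ∘ h = Σ_{m≥0} (h∘η)^m ∘ h` on totalizations. -/
noncomputable def alphaTot (n m : ℤ) (hnm : n + 1 = m) : Tot C n →ₗ[R] Tot C m :=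
  (Ring.inverse ((1 : Module.End R (Tot C m)) - Phi R C h η m) : Module.End R (Tot C m))
    ∘ₗ hTot R C h n m hnm

/-- The transferred differential `π∘α∘ι` on `Tot(S)`. -/
noncomputable def dSTot (n : ℤ) : Tot S n →ₗ[R] Tot S (n + 1) :=
  piTot R C S π (n + 1) ∘ₗ alphaTot R C h η n (n + 1) rfl ∘ₗ iotaTot R C S ι n

/-- The perturbed inclusion `ι' = ι + η∘α∘ι`. -/
noncomputable def iotaTot' (n : ℤ) : Tot S n →ₗ[R] Tot C n :=
  iotaTot R C S ι n +
    etaTot R C η (n + 1) n rfl ∘ₗ alphaTot R C h η n (n + 1) rfl ∘ₗ iotaTot R C S ι n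

/-- The perturbed projection `π' = π + π∘α∘η`. -/
noncomputable def piTot' (n : ℤ) : Tot C n →ₗ[R] Tot S n :=
  piTot R C S π n +
    piTot R C S π n ∘ₗ alphaTot R C h η (n - 1) n (by omega) ∘ₗ
      etaTot R C η n (n - 1) (by omega)

/-- The perturbed homotopy `η' = η + η∘α∘η` (from degree `n + 1` to degree `n`). -/
noncomputable def etaTot' (n : ℤ) : Tot C (n + 1) →ₗ[R] Tot C n :=
  etaTot R C η (n + 1) n rfl +
    etaTot R C η (n + 1) n rfl ∘ₗ alphaTot R C h η n (n + 1) rfl ∘ₗ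
      etaTot R C η (n + 1) n rfl

/-- `f` is a quasi-isomorphism between ℤ-indexed cochain complexes, given as families of
`R`-modules with differentials: it induces a bijection on cohomology in every degree
(stated elementwise in every degree `n + 1`, `n : ℤ`, which covers every degree). -/
def IsQuasiIsoFam {X Y : ℤ → Type*} [∀ n, AddCommGroup (X n)] [∀ n, Module R (X n)]
    [∀ n, AddCommGroup (Y n)] [∀ n, Module R (Y n)]
    (dX : ∀ n : ℤ, X n →ₗ[R] X (n + 1)) (dY : ∀ n : ℤ, Y n →ₗ[R] Y (n + 1))
    (f : ∀ n : ℤ, X n →ₗ[R] Y n) : Prop :=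
  (∀ (n : ℤ) (y : Y (n + 1)), dY (n + 1) y = 0 →
      ∃ x : X (n + 1), dX (n + 1) x = 0 ∧ ∃ z : Y n, f (n + 1) x = y + dY n z) ∧
  (∀ (n : ℤ) (x : X (n + 1)), dX (n + 1) x = 0 → (∃ z : Y n, f (n + 1) x = dY n z) →
      ∃ w : X n, x = dX n w)

end

open scoped Ring

theorem Ring.inverse_one_sub_eq_geom_sum {A : Type*} [Ring A] {T : A} {N : ℕ} (hT : T ^ N = 0) :
    (1 - T)⁻¹ʳ = ∑ i ∈ Finset.range N, T ^ i := by
  have hunit : IsUnit (1 - T) := IsNilpotent.isUnit_one_sub ⟨N, hT⟩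
  rw [← mul_one (1 - T)⁻¹ʳ, Ring.inverse_mul_eq_iff_eq_mul _ _ _ hunit, mul_neg_geom_sum, hT,
    sub_zero]

namespace Module.End

variable {R M : Type*} [Ring R] [AddCommGroup M] [Module R M] {u T : Module.End R M}

theorem apply_ringInverse_apply (hu : IsUnit u) (x : M) : u (u⁻¹ʳ x) = x :=
  LinearMap.congr_fun (Ring.mul_inverse_cancel u hu) x

theorem ringInverse_apply_apply (hu : IsUnit u) (x : M) : u⁻¹ʳ (u x) = x :=
  LinearMap.congr_fun (Ring.inverse_mul_cancel u hu) x

theorem ringInverse_one_sub_apply_apply (hT : IsUnit (1 - T)) (x : M) :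
    (1 - T)⁻¹ʳ (T x) = (1 - T)⁻¹ʳ x - x := by
  have := ringInverse_apply_apply hT x
  rw [LinearMap.sub_apply, map_sub, one_apply] at this
  exact eq_sub_of_add_eq (sub_eq_iff_eq_add'.1 this).symm

theorem apply_ringInverse_one_sub_apply (hT : IsUnit (1 - T)) (x : M) :
    T ((1 - T)⁻¹ʳ x) = (1 - T)⁻¹ʳ x - x := by
  have := apply_ringInverse_apply hT x
  rw [LinearMap.sub_apply, one_apply] at this
  exact eq_sub_of_add_eq (sub_eq_iff_eq_add'.1 this).symm

theorem ringInverse_one_sub_apply_sub {N : Type*} [AddCommGroup N] [Module R N]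
    {T' : Module.End R N} (f : M →ₗ[R] N) (hT : IsUnit (1 - T)) (hT' : IsUnit (1 - T'))
    (x : M) :
    (1 - T')⁻¹ʳ (f x) - f ((1 - T)⁻¹ʳ x) =
      (1 - T')⁻¹ʳ (T' (f ((1 - T)⁻¹ʳ x)) - f (T ((1 - T)⁻¹ʳ x))) := by
  set a := (1 - T)⁻¹ʳ x
  have hfx : f x = f a - f (T a) := by
    rw [← map_sub]
    simpa using congrArg f (apply_ringInverse_apply hT x).symm
  rw [hfx, map_sub, map_sub, ringInverse_one_sub_apply_apply hT']
  abel

theorem ringInverse_one_sub_apply_of_intertwines {N : Type*} [AddCommGroup N] [Module R N]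
    {T' : Module.End R N} {f : M →ₗ[R] N} (hT : IsUnit (1 - T)) (hT' : IsUnit (1 - T'))
    (hf : ∀ x, T' (f x) = f (T x)) (x : M) :
    (1 - T')⁻¹ʳ (f x) = f ((1 - T)⁻¹ʳ x) := by
  rw [← sub_eq_zero, ringInverse_one_sub_apply_sub f hT hT', hf, sub_self, map_zero]

end Module.End

section QuasiIso

variable {R : Type u} [Ring R] {X Y : ℤ → Type*} [∀ n, AddCommGroup (X n)] [∀ n, Module R (X n)]
  [∀ n, AddCommGroup (Y n)] [∀ n, Module R (Y n)]
  {dX : ∀ n : ℤ, X n →ₗ[R] X (n + 1)} {dY : ∀ n : ℤ, Y n →ₗ[R] Y (n + 1)}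

theorem comp_eq_zero_of_injective_chainMap (f : ∀ n, X n →ₗ[R] Y n)
    (hf : ∀ n, dY n ∘ₗ f n = f (n + 1) ∘ₗ dX n) (hinj : ∀ n, Function.Injective (f n))
    (hdY : ∀ n, dY (n + 1) ∘ₗ dY n = 0) (n : ℤ) : dX (n + 1) ∘ₗ dX n = 0 := by
  ext x
  apply hinj (n + 1 + 1)
  have hfx (m : ℤ) (y : X m) : f (m + 1) (dX m y) = dY m (f m y) :=
    (LinearMap.congr_fun (hf m) y).symm
  rw [LinearMap.zero_apply, map_zero, LinearMap.comp_apply, hfx, hfx]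
  exact LinearMap.congr_fun (hdY n) (f n x)

theorem isQuasiIsoFam_of_homotopy_of_bijective (f : ∀ n, X n →ₗ[R] Y n)
    (g : ∀ n, Y n →ₗ[R] X n) (k : ∀ n, Y (n + 1) →ₗ[R] Y n)
    (hf : ∀ n, dY n ∘ₗ f n = f (n + 1) ∘ₗ dX n) (hg : ∀ n, dX n ∘ₗ g n = g (n + 1) ∘ₗ dY n)
    (hfg : ∀ n, f (n + 1) ∘ₗ g (n + 1) =
      LinearMap.id + dY n ∘ₗ k n + k (n + 1) ∘ₗ dY (n + 1))
    (hgf : ∀ n, Function.Bijective (g n ∘ₗ f n)) :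
    IsQuasiIsoFam R dX dY f ∧ IsQuasiIsoFam R dY dX g := by
  have hf' (n : ℤ) (x : X n) : dY n (f n x) = f (n + 1) (dX n x) := LinearMap.congr_fun (hf n) x
  have hg' (n : ℤ) (y : Y n) : dX n (g n y) = g (n + 1) (dY n y) := LinearMap.congr_fun (hg n) y
  have hfg' (n : ℤ) (y : Y (n + 1)) :
      f (n + 1) (g (n + 1) y) = y + dY n (k n y) + k (n + 1) (dY (n + 1) y) :=
    LinearMap.congr_fun (hfg n) y
  have hgf_comm (n : ℤ) (x : X n) : g (n + 1) (f (n + 1) (dX n x)) = dX n (g n (f n x)) := by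
    rw [← hf', hg']
  refine ⟨⟨fun n y hy => ⟨g (n + 1) y, ?_, k n y, ?_⟩, fun n x hx ⟨z, hz⟩ => ?_⟩,
    ⟨fun n x hx => ?_, fun n y hy ⟨z, hz⟩ => ⟨f n z - k n y, ?_⟩⟩⟩
  · rw [hg', hy, map_zero]
  · rw [hfg', hy, map_zero, add_zero]
  · obtain ⟨w, hw⟩ := (hgf n).2 (g n z)
    refine ⟨w, (hgf (n + 1)).1 ?_⟩
    simp only [LinearMap.comp_apply] at hw ⊢
    rw [hz, ← hg', hgf_comm, hw]
  · obtain ⟨w, hw⟩ := (hgf (n + 1)).2 x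
    simp only [LinearMap.comp_apply] at hw
    refine ⟨f (n + 1) w, ?_, 0, by rw [hw, map_zero, add_zero]⟩
    have hdw : dX (n + 1) w = 0 := (hgf (n + 1 + 1)).1 (by
      simp only [LinearMap.comp_apply]; rw [hgf_comm, hw, hx, map_zero, map_zero])
    rw [hf', hdw, map_zero]
  · have h1 := hfg' n y
    rw [hy, map_zero, add_zero, hz, ← hf'] at h1
    rw [map_sub, h1]
    abel

end QuasiIso

section Totalization

variable {R : Type u} [Ring R]
  {C : ℤ → ℤ → Type v₁} [∀ j k, AddCommGroup (C j k)] [∀ j k, Module R (C j k)]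
  {D : ℤ → ℤ → Type v₁} [∀ j k, AddCommGroup (D j k)] [∀ j k, Module R (D j k)]

theorem totMk_toTot {n m j k : ℤ} (hn : j + k = n)
    (g : ∀ j k : ℤ, j + k = n → (C j k →ₗ[R] Tot D m)) (c : C j k) :
    totMk R C D n m g (toTot R C j k n hn c) = g j k hn c := by
  simp [totMk, toTot, DirectSum.toModule_lof]

theorem toTot_lcast {j j' k k' n : ℤ} (hj : j = j') (hk : k = k') (hn : j' + k' = n)
    (c : C j k) : toTot R C j' k' n hn (lcast R C hj hk c) = toTot R C j k n (by omega) c := by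
  subst hj hk
  rfl

variable (R) in
@[elab_as_elim]
theorem Tot.induction_on {n : ℤ} {motive : Tot C n → Prop} (x : Tot C n) (zero : motive 0)
    (of : ∀ j k (hn : j + k = n) (c : C j k), motive (toTot R C j k n hn c))
    (add : ∀ x y, motive x → motive y → motive (x + y)) : motive x := by
  induction x using DirectSum.induction_on with
  | zero => exact zero
  | of q c => exact of q.1.1 q.1.2 q.2 c
  | add x y hx hy => exact add x y hx hy

variable (R C) in
def columnFiltration (n p : ℤ) : Submodule R (Tot C n) where
  carrier := {x | ∀ q : TotIdx n, q.1.1 < p → x q = 0}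
  add_mem' {a b} ha hb q hq := by rw [DirectSum.add_apply, ha q hq, hb q hq, add_zero]
  zero_mem' _ _ := rfl
  smul_mem' c x hx q hq := by rw [DFinsupp.smul_apply, hx q hq, smul_zero]

theorem columnFiltration_antitone {n : ℤ} : Antitone (columnFiltration R C n) :=
  fun _ _ hp _ hx q hq => hx q (lt_of_lt_of_le hq hp)

theorem toTot_mem_columnFiltration {j k n p : ℤ} (hn : j + k = n) (hp : p ≤ j) (c : C j k) :
    toTot R C j k n hn c ∈ columnFiltration R C n p := by
  classical
  intro q hq
  refine DirectSum.of_eq_of_ne _ _ _ fun e => ?_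
  subst e
  exact absurd hq (not_lt.2 hp)

def IsFirstQuadrant (C : ℤ → ℤ → Type v₁) : Prop :=
  ∀ j k : ℤ, j < 0 ∨ k < 0 → Subsingleton (C j k)

theorem IsFirstQuadrant.columnFiltration_zero_eq_top (hC : IsFirstQuadrant C) (n : ℤ) :
    columnFiltration R C n 0 = ⊤ :=
  eq_top_iff.2 fun _ _ q hq => (hC q.1.1 q.1.2 (Or.inl hq)).elim _ _

theorem IsFirstQuadrant.columnFiltration_eq_bot (hC : IsFirstQuadrant C) {n p : ℤ}
    (hp : n < p) : columnFiltration R C n p = ⊥ := by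
  refine eq_bot_iff.2 fun x hx => DFinsupp.ext fun q => ?_
  by_cases hq : q.1.1 < p
  · exact hx q hq
  · have : Subsingleton (C q.1.1 q.1.2) := hC _ _ (Or.inr (by have := q.2; omega))
    exact Subsingleton.elim _ _

variable (R C) in
def RaisesColumnFiltration (n e : ℤ) (T : Module.End R (Tot C n)) : Prop :=
  ∀ p, ∀ x ∈ columnFiltration R C n p, T x ∈ columnFiltration R C n (p + e)

namespace RaisesColumnFiltration

variable {n e e' : ℤ} {T T' : Module.End R (Tot C n)}

theorem mono (hT : RaisesColumnFiltration R C n e T) (he : e' ≤ e) :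
    RaisesColumnFiltration R C n e' T :=
  fun p x hx => columnFiltration_antitone (by omega) (hT p x hx)

theorem one : RaisesColumnFiltration R C n 0 1 :=
  fun p x hx => by simpa using hx

theorem add (hT : RaisesColumnFiltration R C n e T) (hT' : RaisesColumnFiltration R C n e T') :
    RaisesColumnFiltration R C n e (T + T') :=
  fun p x hx => add_mem (hT p x hx) (hT' p x hx)

theorem mul (hT : RaisesColumnFiltration R C n e T) (hT' : RaisesColumnFiltration R C n e' T') :
    RaisesColumnFiltration R C n (e + e') (T * T') :=
  fun p x hx => by simpa [add_comm e, add_assoc] using hT _ _ (hT' p x hx)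

theorem sum {ι : Type*} (s : Finset ι) {T : ι → Module.End R (Tot C n)}
    (hT : ∀ i ∈ s, RaisesColumnFiltration R C n e (T i)) :
    RaisesColumnFiltration R C n e (∑ i ∈ s, T i) :=
  fun p x hx => by
    rw [LinearMap.sum_apply]
    exact Submodule.sum_mem _ fun i hi => hT i hi p x hx

theorem pow (hT : RaisesColumnFiltration R C n e T) (m : ℕ) :
    RaisesColumnFiltration R C n (m * e) (T ^ m) := by
  induction m with
  | zero => simpa using one
  | succ m ih => simpa [pow_succ', add_mul, add_comm] using hT.mul ih

theorem of_toTot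
    (hT : ∀ (j k : ℤ) (hn : j + k = n) (c : C j k),
      T (toTot R C j k n hn c) ∈ columnFiltration R C n (j + e)) :
    RaisesColumnFiltration R C n e T := by
  classical
  intro p x hx
  rw [← DirectSum.sum_support_of x, map_sum]
  refine Submodule.sum_mem _ fun ⟨⟨j, k⟩, hn⟩ _ => ?_
  by_cases hj : j < p
  · simp [hx ⟨(j, k), hn⟩ hj]
  · exact columnFiltration_antitone (by omega) (hT j k hn (x ⟨(j, k), hn⟩))

theorem pow_eq_zero (hC : IsFirstQuadrant C) (hT : RaisesColumnFiltration R C n 1 T) :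
    T ^ (n.toNat + 1) = 0 := by
  refine LinearMap.ext fun x => ?_
  have hx : x ∈ columnFiltration R C n 0 := by simp [hC.columnFiltration_zero_eq_top]
  have := hT.pow (n.toNat + 1) 0 x hx
  rwa [hC.columnFiltration_eq_bot (by push_cast; omega)] at this

theorem ringInverse_one_sub (hC : IsFirstQuadrant C) (hT : RaisesColumnFiltration R C n 1 T) :
    RaisesColumnFiltration R C n 0 (1 - T)⁻¹ʳ := by
  rw [Ring.inverse_one_sub_eq_geom_sum (hT.pow_eq_zero hC)]
  exact sum _ fun m _ => (hT.pow m).mono (by positivity)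

end RaisesColumnFiltration

end Totalization

section DoubleComplex

variable {R : Type u} [Ring R]
  {C : ℤ → ℤ → Type v₁} [∀ j k, AddCommGroup (C j k)] [∀ j k, Module R (C j k)]
  {S : ℤ → ℤ → Type v₁} [∀ j k, AddCommGroup (S j k)] [∀ j k, Module R (S j k)]
  {h : ∀ j k : ℤ, C j k →ₗ[R] C (j + 1) k} {v : ∀ j k : ℤ, C j k →ₗ[R] C j (k + 1)}
  {η : ∀ j k : ℤ, C j k →ₗ[R] C j (k - 1)}
  {ι : ∀ j k : ℤ, S j k →ₗ[R] C j k} {π : ∀ j k : ℤ, C j k →ₗ[R] S j k}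
  {n m p j k : ℤ}

@[simp]
theorem hTot_toTot (hnm : n + 1 = m) (hn : j + k = n) (c : C j k) :
    hTot R C h n m hnm (toTot R C j k n hn c) = toTot R C (j + 1) k m (by omega) (h j k c) :=
  totMk_toTot hn _ c

@[simp]
theorem vTot_toTot (hnm : n + 1 = m) (hn : j + k = n) (c : C j k) :
    vTot R C v n m hnm (toTot R C j k n hn c) = toTot R C j (k + 1) m (by omega) (v j k c) :=
  totMk_toTot hn _ c

@[simp]
theorem etaTot_toTot (hmn : m + 1 = n) (hn : j + k = n) (c : C j k) :
    etaTot R C η n m hmn (toTot R C j k n hn c) = toTot R C j (k - 1) m (by omega) (η j k c) :=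
  totMk_toTot hn _ c

@[simp]
theorem iotaTot_toTot (hn : j + k = n) (s : S j k) :
    iotaTot R C S ι n (toTot R S j k n hn s) = toTot R C j k n hn (ι j k s) :=
  totMk_toTot hn _ s

@[simp]
theorem piTot_toTot (hn : j + k = n) (c : C j k) :
    piTot R C S π n (toTot R C j k n hn c) = toTot R S j k n hn (π j k c) :=
  totMk_toTot hn _ c

theorem hTot_hTot_apply (hhh : ∀ j k : ℤ, h (j + 1) k ∘ₗ h j k = 0)
    (h1 : n + 1 = m) (h2 : m + 1 = p) (x : Tot C n) :
    hTot R C h m p h2 (hTot R C h n m h1 x) = 0 := by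
  refine Tot.induction_on R x (by simp) (fun j k hn c => ?_) (fun x y hx hy => by simp [hx, hy])
  have hc : h (j + 1) k (h j k c) = 0 := LinearMap.congr_fun (hhh j k) c
  simp [hc]

theorem vTot_vTot_apply (hvv : ∀ j k : ℤ, v j (k + 1) ∘ₗ v j k = 0)
    (h1 : n + 1 = m) (h2 : m + 1 = p) (x : Tot C n) :
    vTot R C v m p h2 (vTot R C v n m h1 x) = 0 := by
  refine Tot.induction_on R x (by simp) (fun j k hn c => ?_) (fun x y hx hy => by simp [hx, hy])
  have hc : v j (k + 1) (v j k c) = 0 := LinearMap.congr_fun (hvv j k) c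
  simp [hc]

theorem hTot_vTot_apply (hhv : ∀ j k : ℤ, h j (k + 1) ∘ₗ v j k + v (j + 1) k ∘ₗ h j k = 0)
    {m' : ℤ} (h1 : n + 1 = m) (h2 : m + 1 = p) (h1' : n + 1 = m') (h2' : m' + 1 = p)
    (x : Tot C n) :
    hTot R C h m p h2 (vTot R C v n m h1 x) = -vTot R C v m' p h2' (hTot R C h n m' h1' x) := by
  refine Tot.induction_on R x (by simp) (fun j k hn c => ?_)
    (fun x y hx hy => by simp only [map_add, hx, hy, neg_add])
  have hc : h j (k + 1) (v j k c) = -v (j + 1) k (h j k c) :=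
    eq_neg_of_add_eq_zero_left (LinearMap.congr_fun (hhv j k) c)
  simp [hc]

theorem vTot_iotaTot_apply (hvι : ∀ j k : ℤ, v j k ∘ₗ ι j k = 0) (hnm : n + 1 = m)
    (s : Tot S n) : vTot R C v n m hnm (iotaTot R C S ι n s) = 0 := by
  refine Tot.induction_on R s (by simp) (fun j k hn c => ?_) (fun x y hx hy => by simp [hx, hy])
  have hc : v j k (ι j k c) = 0 := LinearMap.congr_fun (hvι j k) c
  simp [hc]

theorem piTot_vTot_apply (hπv : ∀ j k : ℤ, π j (k + 1) ∘ₗ v j k = 0) (hnm : n + 1 = m)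
    (x : Tot C n) : piTot R C S π m (vTot R C v n m hnm x) = 0 := by
  refine Tot.induction_on R x (by simp) (fun j k hn c => ?_) (fun x y hx hy => by simp [hx, hy])
  have hc : π j (k + 1) (v j k c) = 0 := LinearMap.congr_fun (hπv j k) c
  simp [hc]

variable (R C S v η ι π) in
def IsColumnHomotopy : Prop :=
  ∀ j k : ℤ, ι j k ∘ₗ π j k =
    (LinearMap.id : C j k →ₗ[R] C j k)
      + lcast R C rfl (Int.sub_add_cancel k 1) ∘ₗ v j (k - 1) ∘ₗ η j k
      + lcast R C rfl (Int.add_sub_cancel k 1) ∘ₗ η j (k + 1) ∘ₗ v j k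

theorem iotaTot_piTot_apply (hcontr : IsColumnHomotopy R C S v η ι π) {m' : ℤ}
    (hmn : m + 1 = n) (hnm' : n + 1 = m') (x : Tot C n) :
    iotaTot R C S ι n (piTot R C S π n x) =
      x + vTot R C v m n hmn (etaTot R C η n m hmn x) +
        etaTot R C η m' n hnm' (vTot R C v n m' hnm' x) := by
  refine Tot.induction_on R x (by simp) (fun j k hn c => ?_)
    (fun x y hx hy => by simp only [map_add, hx, hy]; abel)
  have hc := LinearMap.congr_fun (hcontr j k) c
  simp only [LinearMap.comp_apply, LinearMap.add_apply, LinearMap.id_apply] at hc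
  simp [hc, toTot_lcast]

theorem piTot_iotaTot_apply (hπι : ∀ j k : ℤ, π j k ∘ₗ ι j k = LinearMap.id) (s : Tot S n) :
    piTot R C S π n (iotaTot R C S ι n s) = s := by
  refine Tot.induction_on R s (by simp) (fun j k hn c => ?_) (fun x y hx hy => by simp [hx, hy])
  have hc : π j k (ι j k c) = c := LinearMap.congr_fun (hπι j k) c
  simp [hc]


theorem lcast_apply_lcast {j j' j'' k k' k'' : ℤ} (hj : j = j') (hk : k = k')
    (hj' : j' = j'') (hk' : k' = k'') (x : C j k) :
    lcast R C hj' hk' (lcast R C hj hk x) = lcast R C (hj.trans hj') (hk.trans hk') x := by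
  subst hj hk hj' hk'
  rfl

theorem apply_lcast (f : ∀ j k, S j k →ₗ[R] C j k) {j j' k k' : ℤ} (hj : j = j') (hk : k = k')
    (x : S j k) : f j' k' (lcast R S hj hk x) = lcast R C hj hk (f j k x) := by
  subst hj hk
  rfl

theorem pi_comp_iota_eq_id (hvι : ∀ j k : ℤ, v j k ∘ₗ ι j k = 0)
    (hcontr : IsColumnHomotopy R C S v η ι π)
    (hcolι : ∀ j : ℤ, IsQuasiIsoFam R (fun k => (0 : S j k →ₗ[R] S j (k + 1))) (v j) (ι j))
    (j k : ℤ) : π j k ∘ₗ ι j k = LinearMap.id := by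
  ext s
  have hk : k - 1 + 1 = k := by omega
  -- `ι` is injective on `S` modulo `v`-boundaries; `ι (π ι s - s)` is the boundary of `η ι s`
  have hc := LinearMap.congr_fun (hcontr j k) (ι j k s)
  have hvs : v j k (ι j k s) = 0 := LinearMap.congr_fun (hvι j k) s
  simp only [LinearMap.comp_apply, LinearMap.add_apply, LinearMap.id_apply, hvs, map_zero,
    add_zero] at hc
  set y := lcast R S rfl hk.symm (π j k (ι j k s) - s)
  have hy : ι j (k - 1 + 1) y = v j (k - 1) (η j k (ι j k s)) := by
    rw [apply_lcast, map_sub, hc, add_sub_cancel_left, lcast_apply_lcast]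
    rfl
  obtain ⟨w, hw⟩ := (hcolι j).2 (k - 1) y rfl ⟨_, hy⟩
  have hy0 : lcast R S rfl hk y = 0 := by rw [hw]; exact map_zero _
  rw [lcast_apply_lcast] at hy0
  exact sub_eq_zero.1 hy0


variable (R C h η) in
noncomputable def Psi (n : ℤ) : Module.End R (Tot C n) :=
  etaTot R C η (n + 1) n rfl ∘ₗ hTot R C h n (n + 1) rfl

theorem hTot_etaTot_apply (hmn : m + 1 = n) (x : Tot C n) :
    hTot R C h m n hmn (etaTot R C η n m hmn x) = Phi R C h η n x := by
  obtain rfl : m = n - 1 := by omega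
  rfl

theorem etaTot_hTot_apply (hnm : n + 1 = m) (x : Tot C n) :
    etaTot R C η m n hnm (hTot R C h n m hnm x) = Psi R C h η n x := by
  subst hnm
  rfl

theorem raisesColumnFiltration_Phi : RaisesColumnFiltration R C n 1 (Phi R C h η n) :=
  .of_toTot fun j k hn c => by
    rw [← hTot_etaTot_apply (by omega : n - 1 + 1 = n), etaTot_toTot _ hn, hTot_toTot]
    exact toTot_mem_columnFiltration _ le_rfl _

theorem raisesColumnFiltration_Psi : RaisesColumnFiltration R C n 1 (Psi R C h η n) :=
  .of_toTot fun j k hn c => by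
    rw [← etaTot_hTot_apply rfl, hTot_toTot _ hn, etaTot_toTot]
    exact toTot_mem_columnFiltration _ le_rfl _

variable (h η) in
theorem isUnit_one_sub_Phi (hC : IsFirstQuadrant C) (n : ℤ) :
    IsUnit (1 - Phi R C h η n) :=
  IsNilpotent.isUnit_one_sub ⟨_, raisesColumnFiltration_Phi.pow_eq_zero hC⟩

variable (h η) in
theorem isUnit_one_sub_Psi (hC : IsFirstQuadrant C) (n : ℤ) :
    IsUnit (1 - Psi R C h η n) :=
  IsNilpotent.isUnit_one_sub ⟨_, raisesColumnFiltration_Psi.pow_eq_zero hC⟩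

theorem Phi_hTot_apply (hnm : n + 1 = m) (x : Tot C n) :
    Phi R C h η m (hTot R C h n m hnm x) = hTot R C h n m hnm (Psi R C h η n x) := by
  rw [← hTot_etaTot_apply hnm, etaTot_hTot_apply]

theorem Psi_etaTot_apply (hnm : n + 1 = m) (x : Tot C m) :
    Psi R C h η n (etaTot R C η m n hnm x) = etaTot R C η m n hnm (Phi R C h η m x) := by
  rw [← hTot_etaTot_apply hnm, etaTot_hTot_apply]

theorem hTot_Phi_apply (hhh : ∀ j k : ℤ, h (j + 1) k ∘ₗ h j k = 0) (hnm : n + 1 = m)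
    (x : Tot C n) : hTot R C h n m hnm (Phi R C h η n x) = 0 := by
  rw [← hTot_etaTot_apply (by omega : n - 1 + 1 = n), hTot_hTot_apply hhh]

theorem hTot_ringInverse_one_sub_Phi_apply (hC : IsFirstQuadrant C)
    (hhh : ∀ j k : ℤ, h (j + 1) k ∘ₗ h j k = 0) (hnm : n + 1 = m) (x : Tot C n) :
    hTot R C h n m hnm ((1 - Phi R C h η n)⁻¹ʳ x) = hTot R C h n m hnm x := by
  have hA := Module.End.apply_ringInverse_one_sub_apply (isUnit_one_sub_Phi h η hC n) x
  rw [show (1 - Phi R C h η n)⁻¹ʳ x = x + Phi R C h η n ((1 - Phi R C h η n)⁻¹ʳ x) by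
    rw [hA]; abel, map_add, hTot_Phi_apply hhh, add_zero]

theorem hTot_ringInverse_one_sub_Psi_apply (hC : IsFirstQuadrant C) (hnm : n + 1 = m)
    (x : Tot C n) :
    hTot R C h n m hnm ((1 - Psi R C h η n)⁻¹ʳ x) =
      (1 - Phi R C h η m)⁻¹ʳ (hTot R C h n m hnm x) :=
  (Module.End.ringInverse_one_sub_apply_of_intertwines (isUnit_one_sub_Psi h η hC n)
    (isUnit_one_sub_Phi h η hC m) (Phi_hTot_apply hnm) x).symm

theorem etaTot_ringInverse_one_sub_Phi_apply (hC : IsFirstQuadrant C) (hnm : n + 1 = m)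
    (x : Tot C m) :
    etaTot R C η m n hnm ((1 - Phi R C h η m)⁻¹ʳ x) =
      (1 - Psi R C h η n)⁻¹ʳ (etaTot R C η m n hnm x) :=
  (Module.End.ringInverse_one_sub_apply_of_intertwines (isUnit_one_sub_Phi h η hC m)
    (isUnit_one_sub_Psi h η hC n) (Psi_etaTot_apply hnm) x).symm

theorem Phi_vTot_apply (hhv : ∀ j k : ℤ, h j (k + 1) ∘ₗ v j k + v (j + 1) k ∘ₗ h j k = 0)
    (hcontr : IsColumnHomotopy R C S v η ι π) (hnm : n + 1 = m) (x : Tot C n) :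
    Phi R C h η m (vTot R C v n m hnm x) =
      vTot R C v n m hnm (Phi R C h η n x) +
        hTot R C h n m hnm (iotaTot R C S ι n (piTot R C S π n x) - x) := by
  have hn : n - 1 + 1 = n := by omega
  rw [← hTot_etaTot_apply hnm, iotaTot_piTot_apply hcontr hn hnm, ← hTot_etaTot_apply hn,
    map_sub, map_add, map_add, hTot_vTot_apply hhv hn hnm hn hnm]
  abel

theorem Psi_vTot_apply (hhv : ∀ j k : ℤ, h j (k + 1) ∘ₗ v j k + v (j + 1) k ∘ₗ h j k = 0)
    (hcontr : IsColumnHomotopy R C S v η ι π) (hnm : n + 1 = m) (x : Tot C n) :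
    Psi R C h η m (vTot R C v n m hnm x) =
      vTot R C v n m hnm (Psi R C h η n x) -
        (iotaTot R C S ι m (piTot R C S π m (hTot R C h n m hnm x)) - hTot R C h n m hnm x) := by
  rw [← etaTot_hTot_apply rfl, hTot_vTot_apply hhv hnm rfl hnm rfl,
    iotaTot_piTot_apply hcontr hnm rfl, etaTot_hTot_apply, map_neg]
  abel

theorem ringInverse_one_sub_Phi_vTot_apply (hC : IsFirstQuadrant C)
    (hhv : ∀ j k : ℤ, h j (k + 1) ∘ₗ v j k + v (j + 1) k ∘ₗ h j k = 0)
    (hcontr : IsColumnHomotopy R C S v η ι π) (hnm : n + 1 = m) (x : Tot C n) :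
    (1 - Phi R C h η m)⁻¹ʳ (vTot R C v n m hnm x) =
      vTot R C v n m hnm ((1 - Phi R C h η n)⁻¹ʳ x) +
        (1 - Phi R C h η m)⁻¹ʳ (hTot R C h n m hnm
          (iotaTot R C S ι n (piTot R C S π n ((1 - Phi R C h η n)⁻¹ʳ x)) -
            (1 - Phi R C h η n)⁻¹ʳ x)) := by
  rw [← sub_eq_iff_eq_add', Module.End.ringInverse_one_sub_apply_sub _
    (isUnit_one_sub_Phi h η hC n) (isUnit_one_sub_Phi h η hC m), Phi_vTot_apply hhv hcontr,
    add_sub_cancel_left]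

theorem vTot_ringInverse_one_sub_Psi_apply (hC : IsFirstQuadrant C)
    (hhv : ∀ j k : ℤ, h j (k + 1) ∘ₗ v j k + v (j + 1) k ∘ₗ h j k = 0)
    (hcontr : IsColumnHomotopy R C S v η ι π) (hnm : n + 1 = m) (x : Tot C n) :
    vTot R C v n m hnm ((1 - Psi R C h η n)⁻¹ʳ x) =
      (1 - Psi R C h η m)⁻¹ʳ (vTot R C v n m hnm x) +
        (1 - Psi R C h η m)⁻¹ʳ
          (iotaTot R C S ι m (piTot R C S π m ((1 - Phi R C h η m)⁻¹ʳ (hTot R C h n m hnm x))) -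
            (1 - Phi R C h η m)⁻¹ʳ (hTot R C h n m hnm x)) := by
  have key := Module.End.ringInverse_one_sub_apply_sub (vTot R C v n m hnm)
    (isUnit_one_sub_Psi h η hC n) (isUnit_one_sub_Psi h η hC m) x
  rw [Psi_vTot_apply hhv hcontr, sub_sub_cancel_left, hTot_ringInverse_one_sub_Psi_apply hC,
    map_neg] at key
  rw [← sub_sub_cancel ((1 - Psi R C h η m)⁻¹ʳ (vTot R C v n m hnm x))
    (vTot R C v n m hnm ((1 - Psi R C h η n)⁻¹ʳ x)), key, sub_neg_eq_add]

theorem ringInverse_one_sub_Psi_apply_of_hTot_eq_zero (hC : IsFirstQuadrant C) {y : Tot C n}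
    (hy : hTot R C h n (n + 1) rfl y = 0) : (1 - Psi R C h η n)⁻¹ʳ y = y := by
  have hΨ : Psi R C h η n y = 0 := by rw [← etaTot_hTot_apply rfl, hy, map_zero]
  have := Module.End.ringInverse_one_sub_apply_apply (isUnit_one_sub_Psi h η hC n) y
  rwa [hΨ, map_zero, eq_comm, sub_eq_zero] at this

theorem ringInverse_one_sub_Psi_ringInverse_one_sub_Phi_apply (hC : IsFirstQuadrant C)
    (hhh : ∀ j k : ℤ, h (j + 1) k ∘ₗ h j k = 0) (x : Tot C n) :
    (1 - Psi R C h η n)⁻¹ʳ ((1 - Phi R C h η n)⁻¹ʳ x) =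
      (1 - Phi R C h η n)⁻¹ʳ x + (1 - Psi R C h η n)⁻¹ʳ x - x := by
  set a := (1 - Phi R C h η n)⁻¹ʳ x
  have hA : Phi R C h η n a = a - x :=
    Module.End.apply_ringInverse_one_sub_apply (isUnit_one_sub_Phi h η hC n) x
  have hBΦ : (1 - Psi R C h η n)⁻¹ʳ (Phi R C h η n a) = Phi R C h η n a :=
    ringInverse_one_sub_Psi_apply_of_hTot_eq_zero hC (hTot_Phi_apply hhh rfl a)
  calc (1 - Psi R C h η n)⁻¹ʳ a = (1 - Psi R C h η n)⁻¹ʳ (x + Phi R C h η n a) := by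
        rw [hA, add_sub_cancel]
    _ = a + (1 - Psi R C h η n)⁻¹ʳ x - x := by
        rw [map_add, hBΦ, hA]
        abel


theorem iotaTot'_apply (hC : IsFirstQuadrant C) (s : Tot S n) :
    iotaTot' R C S h η ι n s = (1 - Psi R C h η n)⁻¹ʳ (iotaTot R C S ι n s) := by
  simp only [iotaTot', alphaTot, LinearMap.add_apply, LinearMap.comp_apply]
  rw [etaTot_ringInverse_one_sub_Phi_apply hC, etaTot_hTot_apply,
    Module.End.ringInverse_one_sub_apply_apply (isUnit_one_sub_Psi h η hC n)]
  abel

theorem piTot'_apply (hC : IsFirstQuadrant C) (x : Tot C n) :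
    piTot' R C S h η π n x = piTot R C S π n ((1 - Phi R C h η n)⁻¹ʳ x) := by
  simp only [piTot', alphaTot, LinearMap.add_apply, LinearMap.comp_apply]
  rw [hTot_etaTot_apply, Module.End.ringInverse_one_sub_apply_apply (isUnit_one_sub_Phi h η hC n),
    map_sub]
  abel

theorem etaTot'_apply (hC : IsFirstQuadrant C) (x : Tot C (n + 1)) :
    etaTot' R C h η n x = (1 - Psi R C h η n)⁻¹ʳ (etaTot R C η (n + 1) n rfl x) := by
  simp only [etaTot', alphaTot, LinearMap.add_apply, LinearMap.comp_apply]
  rw [hTot_etaTot_apply, Module.End.ringInverse_one_sub_apply_apply (isUnit_one_sub_Phi h η hC _),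
    map_sub, etaTot_ringInverse_one_sub_Phi_apply hC]
  abel

theorem dTot_apply (x : Tot C n) :
    dTot R C h v n x = hTot R C h n (n + 1) rfl x + vTot R C v n (n + 1) rfl x :=
  rfl

theorem dTot_comp_dTot (hhh : ∀ j k : ℤ, h (j + 1) k ∘ₗ h j k = 0)
    (hvv : ∀ j k : ℤ, v j (k + 1) ∘ₗ v j k = 0)
    (hhv : ∀ j k : ℤ, h j (k + 1) ∘ₗ v j k + v (j + 1) k ∘ₗ h j k = 0) (n : ℤ) :
    dTot R C h v (n + 1) ∘ₗ dTot R C h v n = 0 := by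
  refine LinearMap.ext fun x => ?_
  simp only [LinearMap.comp_apply, dTot_apply, map_add, hTot_hTot_apply hhh,
    vTot_vTot_apply hvv, hTot_vTot_apply hhv rfl rfl rfl rfl, LinearMap.zero_apply]
  abel

theorem dTot_comp_iotaTot' (hC : IsFirstQuadrant C) (hhh : ∀ j k : ℤ, h (j + 1) k ∘ₗ h j k = 0)
    (hhv : ∀ j k : ℤ, h j (k + 1) ∘ₗ v j k + v (j + 1) k ∘ₗ h j k = 0)
    (hvι : ∀ j k : ℤ, v j k ∘ₗ ι j k = 0) (hcontr : IsColumnHomotopy R C S v η ι π) (n : ℤ) :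
    dTot R C h v n ∘ₗ iotaTot' R C S h η ι n =
      iotaTot' R C S h η ι (n + 1) ∘ₗ dSTot R C S h η ι π n := by
  refine LinearMap.ext fun s => ?_
  -- `α ι s` is killed by `h`, hence fixed by `(1 - η h)⁻¹`
  have hfix := ringInverse_one_sub_Psi_apply_of_hTot_eq_zero (η := η) hC
    (y := (1 - Phi R C h η (n + 1))⁻¹ʳ (hTot R C h n (n + 1) rfl (iotaTot R C S ι n s)))
    (by rw [hTot_ringInverse_one_sub_Phi_apply hC hhh, hTot_hTot_apply hhh])
  simp only [LinearMap.comp_apply, dTot_apply, iotaTot'_apply hC, dSTot, alphaTot,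
    hTot_ringInverse_one_sub_Psi_apply hC, vTot_ringInverse_one_sub_Psi_apply hC hhv hcontr,
    vTot_iotaTot_apply hvι, map_zero, map_sub, hfix]
  abel

theorem dSTot_comp_piTot' (hC : IsFirstQuadrant C) (hhh : ∀ j k : ℤ, h (j + 1) k ∘ₗ h j k = 0)
    (hhv : ∀ j k : ℤ, h j (k + 1) ∘ₗ v j k + v (j + 1) k ∘ₗ h j k = 0)
    (hπv : ∀ j k : ℤ, π j (k + 1) ∘ₗ v j k = 0) (hcontr : IsColumnHomotopy R C S v η ι π)
    (n : ℤ) :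
    dSTot R C S h η ι π n ∘ₗ piTot' R C S h η π n =
      piTot' R C S h η π (n + 1) ∘ₗ dTot R C h v n := by
  refine LinearMap.ext fun x => ?_
  simp only [LinearMap.comp_apply, dTot_apply, piTot'_apply hC, dSTot, alphaTot, map_add,
    ringInverse_one_sub_Phi_vTot_apply hC hhv hcontr, piTot_vTot_apply hπv, map_sub,
    hTot_ringInverse_one_sub_Phi_apply hC hhh]
  abel

theorem iotaTot'_comp_piTot' (hC : IsFirstQuadrant C)
    (hhh : ∀ j k : ℤ, h (j + 1) k ∘ₗ h j k = 0)
    (hhv : ∀ j k : ℤ, h j (k + 1) ∘ₗ v j k + v (j + 1) k ∘ₗ h j k = 0)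
    (hcontr : IsColumnHomotopy R C S v η ι π) (n : ℤ) :
    iotaTot' R C S h η ι (n + 1) ∘ₗ piTot' R C S h η π (n + 1) =
      LinearMap.id + dTot R C h v n ∘ₗ etaTot' R C h η n +
        etaTot' R C h η (n + 1) ∘ₗ dTot R C h v (n + 1) := by
  refine LinearMap.ext fun x => ?_
  simp only [LinearMap.add_apply, LinearMap.comp_apply, LinearMap.id_apply, iotaTot'_apply hC,
    piTot'_apply hC, etaTot'_apply hC, dTot_apply, map_add, hTot_ringInverse_one_sub_Psi_apply hC,
    vTot_ringInverse_one_sub_Psi_apply hC hhv hcontr, hTot_etaTot_apply, etaTot_hTot_apply,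
    Module.End.ringInverse_one_sub_apply_apply (isUnit_one_sub_Phi h η hC (n + 1)),
    Module.End.ringInverse_one_sub_apply_apply (isUnit_one_sub_Psi h η hC (n + 1)), map_sub,
    ringInverse_one_sub_Psi_ringInverse_one_sub_Phi_apply hC hhh]
  rw [iotaTot_piTot_apply hcontr rfl rfl x]
  simp only [map_add]
  abel

theorem raisesColumnFiltration_iotaTot_comp_piTot :
    RaisesColumnFiltration R C n 0 (iotaTot R C S ι n ∘ₗ piTot R C S π n) :=
  .of_toTot fun j k hn c => by
    rw [LinearMap.comp_apply, piTot_toTot, iotaTot_toTot]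
    exact toTot_mem_columnFiltration _ (by omega) _

theorem isNilpotent_piTot_comp_comp_iotaTot (hC : IsFirstQuadrant C)
    (hπι : ∀ j k : ℤ, π j k ∘ₗ ι j k = LinearMap.id) {Y : Module.End R (Tot C n)}
    (hY : RaisesColumnFiltration R C n 1 Y) :
    IsNilpotent (piTot R C S π n ∘ₗ Y ∘ₗ iotaTot R C S ι n) := by
  set K := piTot R C S π n ∘ₗ Y ∘ₗ iotaTot R C S ι n
  have hK (m : ℕ) (s : Tot S n) : iotaTot R C S ι n ((K ^ m) s) ∈ columnFiltration R C n m := by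
    induction m generalizing s with
    | zero => simp [hC.columnFiltration_zero_eq_top]
    | succ m ih =>
      have := raisesColumnFiltration_iotaTot_comp_piTot (S := S) (ι := ι) (π := π) _ _
        (hY _ _ (ih s))
      rw [add_zero] at this
      rw [pow_succ', Module.End.mul_apply]
      exact_mod_cast this
  refine ⟨n.toNat + 1, LinearMap.ext fun s => ?_⟩
  have h0 := hK (n.toNat + 1) s
  rw [hC.columnFiltration_eq_bot (by push_cast; omega), Submodule.mem_bot] at h0
  rw [← piTot_iotaTot_apply hπι ((K ^ (n.toNat + 1)) s), h0, map_zero, LinearMap.zero_apply]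

theorem bijective_piTot'_comp_iotaTot' (hC : IsFirstQuadrant C)
    (hπι : ∀ j k : ℤ, π j k ∘ₗ ι j k = LinearMap.id) (n : ℤ) :
    Function.Bijective (piTot' R C S h η π n ∘ₗ iotaTot' R C S h η ι n) := by
  set A := (1 - Phi R C h η n)⁻¹ʳ
  set B := (1 - Psi R C h η n)⁻¹ʳ
  have hAB : A * B - 1 = Phi R C h η n * A * B + Psi R C h η n * B := by
    have hA : Phi R C h η n * A = A - 1 := LinearMap.ext fun x =>
      Module.End.apply_ringInverse_one_sub_apply (isUnit_one_sub_Phi h η hC n) x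
    have hB : Psi R C h η n * B = B - 1 := LinearMap.ext fun x =>
      Module.End.apply_ringInverse_one_sub_apply (isUnit_one_sub_Psi h η hC n) x
    rw [hA, hB, sub_mul, one_mul]
    abel
  have hY : RaisesColumnFiltration R C n 1 (A * B - 1) := by
    rw [hAB]
    have hA : RaisesColumnFiltration R C n 0 A := .ringInverse_one_sub hC raisesColumnFiltration_Phi
    have hB : RaisesColumnFiltration R C n 0 B := .ringInverse_one_sub hC raisesColumnFiltration_Psi
    exact ((raisesColumnFiltration_Phi.mul hA).mul hB).add (raisesColumnFiltration_Psi.mul hB)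
  have hK : piTot' R C S h η π n ∘ₗ iotaTot' R C S h η ι n =
      1 + piTot R C S π n ∘ₗ (A * B - 1) ∘ₗ iotaTot R C S ι n := by
    refine LinearMap.ext fun s => ?_
    simp only [LinearMap.comp_apply, LinearMap.add_apply, Module.End.one_apply, LinearMap.sub_apply,
      Module.End.mul_apply, piTot'_apply hC, iotaTot'_apply hC, map_sub, piTot_iotaTot_apply hπι]
    abel
  rw [← Module.End.isUnit_iff, hK]
  exact (isNilpotent_piTot_comp_comp_iotaTot hC hπι hY).isUnit_one_add

end DoubleComplex

section

variable (R : Type u) [Ring R]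
variable (C : ℤ → ℤ → Type v₁) [∀ j k, AddCommGroup (C j k)] [∀ j k, Module R (C j k)]
variable (S : ℤ → ℤ → Type v₁) [∀ j k, AddCommGroup (S j k)] [∀ j k, Module R (S j k)]
variable (h : ∀ j k : ℤ, C j k →ₗ[R] C (j + 1) k)
variable (v : ∀ j k : ℤ, C j k →ₗ[R] C j (k + 1))
variable (η : ∀ j k : ℤ, C j k →ₗ[R] C j (k - 1))
variable (ι : ∀ j k : ℤ, S j k →ₗ[R] C j k)
variable (π : ∀ j k : ℤ, C j k →ₗ[R] S j k)

theorem hpl_for_double_complexes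
    -- first-quadrant conditions
    (hCfq : ∀ j k : ℤ, j < 0 ∨ k < 0 → Subsingleton (C j k))
    -- double complex axioms
    (hhh : ∀ j k : ℤ, h (j + 1) k ∘ₗ h j k = 0)
    (hvv : ∀ j k : ℤ, v j (k + 1) ∘ₗ v j k = 0)
    (hhv : ∀ j k : ℤ, h j (k + 1) ∘ₗ v j k + v (j + 1) k ∘ₗ h j k = 0)
    -- column-wise contraction axioms
    (hvι : ∀ j k : ℤ, v j k ∘ₗ ι j k = 0)
    (hπv : ∀ j k : ℤ, π j (k + 1) ∘ₗ v j k = 0)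
    (hcontr : ∀ j k : ℤ, ι j k ∘ₗ π j k =
      (LinearMap.id : C j k →ₗ[R] C j k)
        + lcast R C rfl (by omega : k - 1 + 1 = k) ∘ₗ v j (k - 1) ∘ₗ η j k
        + lcast R C rfl (by omega : k + 1 - 1 = k) ∘ₗ η j (k + 1) ∘ₗ v j k)
    (hcolι : ∀ j : ℤ, IsQuasiIsoFam R
      (fun k => (0 : S j k →ₗ[R] S j (k + 1))) (v j) (ι j)) :
    -- local nilpotency and invertibility of `id − h∘η`
    (∀ n : ℤ, ∃ N : ℕ, Phi R C h η n ^ N = 0) ∧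
    (∀ n : ℤ, IsUnit ((1 : Module.End R (Tot C n)) - Phi R C h η n)) ∧
    -- (i) the transferred differential is square-zero
    (∀ n : ℤ, dSTot R C S h η ι π (n + 1) ∘ₗ dSTot R C S h η ι π n = 0) ∧
    -- (ii) `ι'` and `π'` are chain maps
    (∀ n : ℤ, dTot R C h v n ∘ₗ iotaTot' R C S h η ι n =
      iotaTot' R C S h η ι (n + 1) ∘ₗ dSTot R C S h η ι π n) ∧
    (∀ n : ℤ, dSTot R C S h η ι π n ∘ₗ piTot' R C S h η π n =
      piTot' R C S h η π (n + 1) ∘ₗ dTot R C h v n) ∧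
    -- (iii) they are quasi-isomorphisms
    IsQuasiIsoFam R (dSTot R C S h η ι π) (dTot R C h v) (iotaTot' R C S h η ι) ∧
    IsQuasiIsoFam R (dTot R C h v) (dSTot R C S h η ι π) (piTot' R C S h η π) ∧
    -- (iv) `η'` is a homotopy from `ι'∘π'` to the identity
    (∀ n : ℤ, iotaTot' R C S h η ι (n + 1) ∘ₗ piTot' R C S h η π (n + 1) =
      LinearMap.id
        + dTot R C h v n ∘ₗ etaTot' R C h η n
        + etaTot' R C h η (n + 1) ∘ₗ dTot R C h v (n + 1)) := by
  have hπι := pi_comp_iota_eq_id hvι hcontr hcolι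
  have hι' := dTot_comp_iotaTot' hCfq hhh hhv hvι hcontr
  have hπ' := dSTot_comp_piTot' hCfq hhh hhv hπv hcontr
  have hhtpy := iotaTot'_comp_piTot' hCfq hhh hhv hcontr
  have hbij := bijective_piTot'_comp_iotaTot' (h := h) (η := η) hCfq hπι
  have hinj (n : ℤ) : Function.Injective (iotaTot' R C S h η ι n) :=
    .of_comp (f := piTot' R C S h η π n) (hbij n).injective
  have hqis := isQuasiIsoFam_of_homotopy_of_bijective _ _ _ hι' hπ' hhtpy hbij
  exact ⟨fun n => ⟨_, raisesColumnFiltration_Phi.pow_eq_zero hCfq⟩, isUnit_one_sub_Phi h η hCfq,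
    comp_eq_zero_of_injective_chainMap _ hι' hinj (dTot_comp_dTot hhh hvv hhv),
    hι', hπ', hqis.1, hqis.2, hhtpy⟩

end
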